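/- arXiv:2107.00405 — 7 statements merged into one kernel-verified Lean document; each statement's English description precedes it below -/
import Mathlib

section
/- For every fixed nonnegative integer k and λ ∈ (0,1), as n → ∞ one has (b_λ^n)^{(k)}(0) ∼ (−λ)^{n−k} (n(1−λ²))^k, i.e. the ratio of the two sides tends to 1. -/
/-!
Write `b_c(z)^n = (z - c)^n (1 - c z)^{-n}` and embed it in the two-parameter family
`F_{a,b}(z) = (z - c)^a (1 - c z)^{-b}`, which is closed under differentiation:
`F_{a,b}' = a F_{a-1,b} + b c F_{a,b+1}`. By induction on `k`, uniformly in the shifts `p, q`,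
`F_{n-p,n+q}^{(k)}(0) ~ (-c)^{n-p-k} n^k (1 - c^2)^k`: in the recursion both `a` and `b` are
`n + O(1)`, and the second term carries one power of `-c` fewer than the first, so the two
contribute `n` and `-c^2 n` times the previous asymptotic.
-/

open Filter Topology

namespace Blaschke

variable {𝕜 : Type*}

def monomial [Field 𝕜] (c : 𝕜) (a b : ℕ) (z : 𝕜) : 𝕜 := (z - c) ^ a * (1 - c * z)⁻¹ ^ b

section Derivatives

variable [NontriviallyNormedField 𝕜] {c x : 𝕜}

theorem contDiffAt_monomial (hx : 1 - c * x ≠ 0) (n : WithTop ℕ∞) (a b : ℕ) :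
    ContDiffAt 𝕜 n (monomial c a b) x :=
  ((contDiffAt_id.sub contDiffAt_const).pow a).mul
    (((contDiffAt_const.sub (contDiffAt_const.mul contDiffAt_id)).inv hx).pow b)

theorem hasDerivAt_monomial (hx : 1 - c * x ≠ 0) (a b : ℕ) :
    HasDerivAt (monomial c a b)
      (a * monomial c (a - 1) b x + b * c * monomial c a (b + 1) x) x := by
  have hnum : HasDerivAt (fun z => (z - c) ^ a) (a * (x - c) ^ (a - 1)) x := by
    simpa using ((hasDerivAt_id x).sub_const c).fun_pow a
  have hden : HasDerivAt (fun z => (1 - c * z)⁻¹) (c * (1 - c * x)⁻¹ ^ 2) x := by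
    simpa [div_eq_mul_inv, inv_pow] using
      ((hasDerivAt_id x).const_mul c).const_sub 1 |>.fun_inv hx
  refine (hnum.fun_mul (hden.fun_pow b)).congr_deriv ?_
  rcases b with _ | b
  · simp [monomial]
  · simp only [monomial, Nat.add_sub_cancel]; ring

theorem iteratedDeriv_succ_monomial (hx : 1 - c * x ≠ 0) (k a b : ℕ) :
    iteratedDeriv (k + 1) (monomial c a b) x =
      a * iteratedDeriv k (monomial c (a - 1) b) x
        + b * c * iteratedDeriv k (monomial c a (b + 1)) x := by
  have hderiv : deriv (monomial c a b) =ᶠ[𝓝 x]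
      fun z => a * monomial c (a - 1) b z + b * c * monomial c a (b + 1) z := by
    have hopen : ∀ᶠ z in 𝓝 x, 1 - c * z ≠ 0 :=
      (continuous_const.sub (continuous_const.mul continuous_id)).continuousAt.eventually_ne hx
    filter_upwards [hopen] with z hz using (hasDerivAt_monomial hz a b).deriv
  rw [iteratedDeriv_succ', hderiv.iteratedDeriv_eq,
    iteratedDeriv_fun_add (contDiffAt_const.mul (contDiffAt_monomial hx _ _ _))
      (contDiffAt_const.mul (contDiffAt_monomial hx _ _ _)),
    iteratedDeriv_const_mul_field, iteratedDeriv_const_mul_field]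

end Derivatives

section Asymptotics

variable [RCLike 𝕜]

theorem tendsto_natCast_sub_div (p : ℕ) :
    Tendsto (fun n : ℕ => ((n - p : ℕ) : 𝕜) / n) atTop (𝓝 1) := by
  refine ((tendsto_natCast_div_add_atTop (p : 𝕜)).comp (tendsto_sub_atTop_nat p)).congr' ?_
  filter_upwards [eventually_ge_atTop p] with n hn
  simp [Nat.cast_sub hn]

theorem tendsto_natCast_add_div (q : ℕ) :
    Tendsto (fun n : ℕ => ((n + q : ℕ) : 𝕜) / n) atTop (𝓝 1) := by
  simpa using (tendsto_natCast_div_add_atTop (q : 𝕜)).inv₀ one_ne_zero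

theorem monomial_apply_zero (c : 𝕜) (a b : ℕ) : monomial c a b 0 = (-c) ^ a := by
  simp [monomial]

theorem tendsto_iteratedDeriv_monomial {c : 𝕜} (hc : c ≠ 0) (k : ℕ) :
    ∀ p q : ℕ, Tendsto (fun n : ℕ => iteratedDeriv k (monomial c (n - p) (n + q)) 0
      / ((-c) ^ (n - p - k) * (n : 𝕜) ^ k)) atTop (𝓝 ((1 - c ^ 2) ^ k)) := by
  induction k with
  | zero =>
    intro p q
    simp [monomial_apply_zero, hc]
  | succ k ih =>
    intro p q
    have hlim := ((tendsto_natCast_sub_div p).mul (ih (p + 1) q)).add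
      ((tendsto_natCast_add_div q).const_mul (-c ^ 2) |>.mul (ih p (q + 1)))
    rw [show 1 * (1 - c ^ 2) ^ k + -c ^ 2 * 1 * (1 - c ^ 2) ^ k = (1 - c ^ 2) ^ (k + 1) by ring]
      at hlim
    refine hlim.congr' ?_
    filter_upwards [eventually_ge_atTop (p + k + 1)] with n hn
    have hn0 : (n : 𝕜) ≠ 0 := Nat.cast_ne_zero.mpr (by omega)
    obtain ⟨m, hm⟩ : ∃ m, n - p = m + k + 1 := ⟨n - p - k - 1, by omega⟩
    rw [iteratedDeriv_succ_monomial (by simp), hm, show n - (p + 1) = m + k by omega,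
      show m + k + 1 - (k + 1) = m by omega, show m + k + 1 - k = m + 1 by omega,
      show m + k - k = m by omega, Nat.add_sub_cancel, ← add_assoc n q 1, pow_succ, pow_succ]
    have hc' : -c ≠ 0 := neg_ne_zero.mpr hc
    field_simp
    ring

end Asymptotics

end Blaschke

open Blaschke in
/-- For fixed `k` and `λ ∈ (0,1)`, as `n → ∞`,
`(b_λ^n)^{(k)}(0) ∼ (−λ)^{n−k} (n(1−λ²))^k`. -/
theorem stmt2 (l : ℝ) (hl : l ∈ Set.Ioo (0 : ℝ) 1) (k : ℕ) :
    Tendsto (fun n : ℕ =>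
        iteratedDeriv k (fun z : ℂ => ((z - (l : ℂ)) / (1 - (l : ℂ) * z)) ^ n) 0
          / ((-(l : ℂ)) ^ (n - k) * ((n : ℂ) * (1 - (l : ℂ) ^ 2)) ^ k))
      atTop (nhds 1) := by
  have hl0 : (l : ℂ) ≠ 0 := Complex.ofReal_ne_zero.mpr hl.1.ne'
  have hl2 : (1 - (l : ℂ) ^ 2) ^ k ≠ 0 := pow_ne_zero _ <| by
    exact_mod_cast sub_ne_zero.2 (pow_lt_one₀ hl.1.le hl.2 two_ne_zero).ne'
  have hpow : ∀ n : ℕ, (fun z : ℂ => ((z - l) / (1 - l * z)) ^ n) = monomial (l : ℂ) n n := by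
    intro n; funext z; simp [monomial, div_eq_mul_inv, mul_pow]
  have hlim := (tendsto_iteratedDeriv_monomial hl0 k 0 0).div_const ((1 - (l : ℂ) ^ 2) ^ k)
  rw [div_self hl2] at hlim
  simpa [hpow, mul_pow, ← mul_assoc, div_div] using hlim
end

section
/- Let λ ∈ (0,1), α₀ = (1−λ)/(1+λ), a ∉ {α₀, α₀^{−1}}, and let Φ_a(z) = log(z^{−a}b_λ(z)). Then at each stationary point z_± one has Φ_a''(z_±) = λ(1−λ²)(z_± − z_∓) / ((z_± − λ)²(1 − λz_±)²). -/
/-!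
`z_±` are the two roots of `z² - 2Cz + 1`, with `2λaC = a(1+λ²) - (1-λ²)`. Eliminating `C`
shows that each root satisfies `a(z-λ)(1-λz) = (1-λ²)z`, which is `Φ_a'(z) = 0`. Substituting
this into `Φ_a''(z)` over the common denominator `z²(z-λ)²(1-λz)²` reduces the claim to a
polynomial identity, once `z_± z_∓ = 1` is used to write `z_± - z_∓ = (z_±² - 1)/z_±`.
-/

section
variable {K : Type*} [Field K] {a l z w C : K}

theorem stationary_of_root_sum_prod (hsum : z + w = 2 * C) (hmul : z * w = 1)
    (hC : 2 * l * a * C = a * (1 + l ^ 2) - (1 - l ^ 2)) :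
    a * (z - l) * (1 - l * z) = (1 - l ^ 2) * z := by
  linear_combination (-(a * l)) * (z * hsum - hmul) - z * hC

theorem stationary_factors_ne_zero (hl : 1 - l ^ 2 ≠ 0) (hz : z ≠ 0)
    (h : a * (z - l) * (1 - l * z) = (1 - l ^ 2) * z) : (z - l) * (1 - l * z) ≠ 0 := by
  intro h0
  apply mul_ne_zero hl hz
  rw [← h, mul_assoc, h0, mul_zero]

theorem second_deriv_eq_of_stationary (hl : 1 - l ^ 2 ≠ 0) (hmul : z * w = 1)
    (h : a * (z - l) * (1 - l * z) = (1 - l ^ 2) * z) :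
    -1 / (z - l) ^ 2 + a / z ^ 2 + l ^ 2 / (1 - l * z) ^ 2
      = l * (1 - l ^ 2) * (z - w) / ((z - l) ^ 2 * (1 - l * z) ^ 2) := by
  have hz : z ≠ 0 := left_ne_zero_of_mul_eq_one hmul
  obtain ⟨hzl, hlz⟩ := mul_ne_zero_iff.mp (stationary_factors_ne_zero hl hz h)
  rw [mul_comm] at hlz
  field_simp
  linear_combination (z - l) * (1 - z * l) * h + z * l * (1 - l ^ 2) * hmul

theorem second_deriv_eq_of_root_sum_prod (hl : 1 - l ^ 2 ≠ 0) (hsum : z + w = 2 * C)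
    (hmul : z * w = 1) (hC : 2 * l * a * C = a * (1 + l ^ 2) - (1 - l ^ 2)) :
    -1 / (z - l) ^ 2 + a / z ^ 2 + l ^ 2 / (1 - l * z) ^ 2
      = l * (1 - l ^ 2) * (z - w) / ((z - l) ^ 2 * (1 - l * z) ^ 2) :=
  second_deriv_eq_of_stationary hl hmul (stationary_of_root_sum_prod hsum hmul hC)

end

theorem stmt9_general (l a : ℝ) (hl : l ∈ Set.Ioo (0 : ℝ) 1) (ha : 0 < a)
    (s zp zm : ℂ)
    (hs : s ^ 2 = (((a * (1 + l ^ 2) - (1 - l ^ 2)) / (2 * l * a) : ℝ) : ℂ) ^ 2 - 1)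
    (hzp : zp = (((a * (1 + l ^ 2) - (1 - l ^ 2)) / (2 * l * a) : ℝ) : ℂ) + s)
    (hzm : zm = (((a * (1 + l ^ 2) - (1 - l ^ 2)) / (2 * l * a) : ℝ) : ℂ) - s) :
    (-1 / (zp - (l : ℂ)) ^ 2 + (a : ℂ) / zp ^ 2 + (l : ℂ) ^ 2 / (1 - (l : ℂ) * zp) ^ 2
        = (l : ℂ) * (1 - (l : ℂ) ^ 2) * (zp - zm)
            / ((zp - (l : ℂ)) ^ 2 * (1 - (l : ℂ) * zp) ^ 2))
      ∧ (-1 / (zm - (l : ℂ)) ^ 2 + (a : ℂ) / zm ^ 2 + (l : ℂ) ^ 2 / (1 - (l : ℂ) * zm) ^ 2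
        = (l : ℂ) * (1 - (l : ℂ) ^ 2) * (zm - zp)
            / ((zm - (l : ℂ)) ^ 2 * (1 - (l : ℂ) * zm) ^ 2)) := by
  obtain ⟨hl0, hl1⟩ := hl
  set C : ℝ := (a * (1 + l ^ 2) - (1 - l ^ 2)) / (2 * l * a)
  have hC : 2 * l * a * C = a * (1 + l ^ 2) - (1 - l ^ 2) := by
    simp only [C]
    field_simp
  have hCc : 2 * (l : ℂ) * a * C = a * (1 + (l : ℂ) ^ 2) - (1 - (l : ℂ) ^ 2) := by
    exact_mod_cast hC
  have hll : (1 : ℂ) - (l : ℂ) ^ 2 ≠ 0 := by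
    exact_mod_cast (by nlinarith : (1 : ℝ) - l ^ 2 ≠ 0)
  have hsum : zp + zm = 2 * C := by rw [hzp, hzm]; ring
  have hmul : zp * zm = 1 := by rw [hzp, hzm]; linear_combination -hs
  exact ⟨second_deriv_eq_of_root_sum_prod hll hsum hmul hCc,
    second_deriv_eq_of_root_sum_prod hll (by rwa [add_comm]) (by rwa [mul_comm]) hCc⟩

/-- At each stationary point `z_±`,
`Φ_a''(z_±) = λ(1−λ²)(z_± − z_∓)/((z_± − λ)²(1−λz_±)²)`, where
`Φ_a''(z) = −1/(z−λ)² + a/z² + λ²/(1−λz)²`. -/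
theorem stmt9 (l a : ℝ) (hl : l ∈ Set.Ioo (0 : ℝ) 1) (ha : 0 < a)
    (ha1 : a ≠ (1 - l) / (1 + l)) (ha2 : a ≠ (1 + l) / (1 - l))
    (s zp zm : ℂ)
    (hs : s ^ 2 = (((a * (1 + l ^ 2) - (1 - l ^ 2)) / (2 * l * a) : ℝ) : ℂ) ^ 2 - 1)
    (hzp : zp = (((a * (1 + l ^ 2) - (1 - l ^ 2)) / (2 * l * a) : ℝ) : ℂ) + s)
    (hzm : zm = (((a * (1 + l ^ 2) - (1 - l ^ 2)) / (2 * l * a) : ℝ) : ℂ) - s) :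
    (-1 / (zp - (l : ℂ)) ^ 2 + (a : ℂ) / zp ^ 2 + (l : ℂ) ^ 2 / (1 - (l : ℂ) * zp) ^ 2
        = (l : ℂ) * (1 - (l : ℂ) ^ 2) * (zp - zm)
            / ((zp - (l : ℂ)) ^ 2 * (1 - (l : ℂ) * zp) ^ 2))
      ∧ (-1 / (zm - (l : ℂ)) ^ 2 + (a : ℂ) / zm ^ 2 + (l : ℂ) ^ 2 / (1 - (l : ℂ) * zm) ^ 2
        = (l : ℂ) * (1 - (l : ℂ) ^ 2) * (zm - zp)
            / ((zm - (l : ℂ)) ^ 2 * (1 - (l : ℂ) * zm) ^ 2)) :=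
  stmt9_general l a hl ha s zp zm hs hzp hzm
end

section
/- For λ ∈ (0,1), k ≥ 1, n ≥ 1, the following contour integral identity holds: \widehat{b_λ^n}(k) = ((−1)^{n−k} / (2πi)) ∫_{∂𝔻} (1/u) · ((1−λ²)/|1−λu|²) · (b_λ(u))^k · u^{−n} du, where the integral is over the unit circle. -/
/-!
On the unit circle `conj z = z⁻¹`, so `(1 - λ²) / |1 - λz|² = (1 - λ²) z / ((1 - λz)(z - λ))`, and
both integrands become `P(z) (1 - λz)^{-(N+1)} z^{-m}` with `P` a power of `z - λ`. Expanding
`(1 - λz)^{-(N+1)}` in its absolutely convergent power series on `|z| = 1` and integrating term by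
term turns each side into a Taylor coefficient: `[z^k] b_λ^n` on the left,
`(1 - λ²) [z^{n-1}] (z - λ)^{k-1} (1 - λz)^{-(k+1)}` on the right. Multiplying by `1 - λz` shows
that both arrays of coefficients satisfy the same two-step recurrence in `(n, k)`, and they agree
for `n = 1` and for `k = 1`.
-/

lemma eq_of_recurrence_of_eq_on_axes {R : Type*} [Add R] [Mul R] {f g : ℕ → ℕ → R} (a b c : R)
    (hf : ∀ n k, f (n + 1) (k + 1) = a * f (n + 1) k + b * f n k + c * f n (k + 1))
    (hg : ∀ n k, g (n + 1) (k + 1) = a * g (n + 1) k + b * g n k + c * g n (k + 1))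
    (h0k : ∀ k, f 0 k = g 0 k) (hn0 : ∀ n, f n 0 = g n 0) (n k : ℕ) : f n k = g n k := by
  induction n generalizing k with
  | zero => exact h0k k
  | succ n ihn =>
    induction k with
    | zero => exact hn0 (n + 1)
    | succ k ihk => rw [hf, hg, ihk, ihn, ihn]

namespace PowerSeries

variable {R : Type*} [CommRing R]

/-- The expansion of `(1 - l X)⁻¹ ^ (N + 1)`; note the shift in the exponent. -/
noncomputable def invOneSubCXPow (l : R) (N : ℕ) : R⟦X⟧ :=
  mk fun m => ((m + N).choose N : R) * l ^ m

@[simp] lemma coeff_invOneSubCXPow (l : R) (N m : ℕ) :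
    coeff m (invOneSubCXPow l N) = ((m + N).choose N : R) * l ^ m :=
  coeff_mk _ _

@[simp] lemma constantCoeff_invOneSubCXPow (l : R) (N : ℕ) :
    constantCoeff (invOneSubCXPow l N) = 1 := by
  simp [← coeff_zero_eq_constantCoeff_apply]

lemma one_sub_C_mul_X_mul_invOneSubCXPow_succ (l : R) (N : ℕ) :
    (1 - C l * X) * invOneSubCXPow l (N + 1) = invOneSubCXPow l N := by
  ext (_ | m)
  · simp [invOneSubCXPow]
  · have pascal : (m + 1 + (N + 1)).choose (N + 1)
        = (m + 1 + N).choose N + (m + (N + 1)).choose (N + 1) := by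
      rw [show m + 1 + (N + 1) = m + 1 + N + 1 by ring, Nat.choose_succ_succ']
      ring_nf
    simp only [sub_mul, one_mul, mul_assoc, map_sub, coeff_C_mul, coeff_succ_X_mul,
      coeff_invOneSubCXPow, pascal]
    push_cast
    ring

lemma coeff_succ_X_sub_C_mul (l : R) (F : R⟦X⟧) (m : ℕ) :
    coeff (m + 1) ((X - C l) * F) = coeff m F - l * coeff (m + 1) F := by
  rw [sub_mul, map_sub, coeff_succ_X_mul, coeff_C_mul]

lemma coeff_succ_of_one_sub_C_mul_X_mul_eq {l : R} {F G : R⟦X⟧}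
    (h : (1 - C l * X) * F = (X - C l) * G) (m : ℕ) :
    coeff (m + 1) F = l * coeff m F + coeff m G - l * coeff (m + 1) G := by
  have h' := congrArg (coeff (m + 1)) h
  rw [coeff_succ_X_sub_C_mul, sub_mul, one_mul, map_sub, mul_assoc, coeff_C_mul,
    coeff_succ_X_mul] at h'
  linear_combination h'

lemma coeff_one_X_sub_C_pow (l : R) (m : ℕ) :
    coeff 1 ((X - C l) ^ (m + 1)) = (m + 1) * (-l) ^ m := by
  induction m with
  | zero => simp
  | succ m ih =>
    rw [pow_succ, coeff_one_mul, ih]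
    simp only [map_sub, constantCoeff_X, constantCoeff_C, zero_sub, mul_neg, coeff_one_X,
      coeff_succ_C, sub_zero, map_pow, one_mul, Nat.cast_add, Nat.cast_one]
    ring

lemma X_sub_C_pow_mul_invOneSubCXPow_recurrence (l : R) (a b : ℕ) :
    (1 - C l * X) * ((X - C l) ^ (a + 1) * invOneSubCXPow l (b + 1))
      = (X - C l) * ((X - C l) ^ a * invOneSubCXPow l b) := by
  rw [mul_left_comm, one_sub_C_mul_X_mul_invOneSubCXPow_succ, pow_succ']
  ring

theorem coeff_succ_X_sub_C_pow_mul_invOneSubCXPow (l : R) (n k : ℕ) :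
    coeff (k + 1) ((X - C l) ^ (n + 1) * invOneSubCXPow l n)
      = (-1) ^ (n + k) * (1 - l ^ 2) * coeff n ((X - C l) ^ k * invOneSubCXPow l (k + 1)) := by
  refine eq_of_recurrence_of_eq_on_axes
    (f := fun n k => coeff (k + 1) ((X - C l) ^ (n + 1) * invOneSubCXPow l n))
    (g := fun n k =>
      (-1) ^ (n + k) * (1 - l ^ 2) * coeff n ((X - C l) ^ k * invOneSubCXPow l (k + 1)))
    l 1 (-l) (fun n k => ?_) (fun n k => ?_) (fun k => ?_) (fun n => ?_) n k
  · linear_combination coeff_succ_of_one_sub_C_mul_X_mul_eq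
      (X_sub_C_pow_mul_invOneSubCXPow_recurrence l (n + 1) n) (k + 1)
  · linear_combination (-1) ^ (n + k) * (1 - l ^ 2) * coeff_succ_of_one_sub_C_mul_X_mul_eq
      (X_sub_C_pow_mul_invOneSubCXPow_recurrence l k (k + 1)) n
  · simp only [zero_add, pow_one, coeff_succ_X_sub_C_mul, coeff_invOneSubCXPow,
      coeff_zero_eq_constantCoeff_apply, map_mul, map_pow, map_sub, constantCoeff_X,
      constantCoeff_C, constantCoeff_invOneSubCXPow]
    have hsq : ((-1 : R) ^ k) ^ 2 = 1 := by rw [← pow_mul, pow_mul']; norm_num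
    rw [zero_sub, neg_pow l]
    simp only [add_zero, Nat.choose_zero_right, Nat.cast_one, one_mul, mul_one]
    linear_combination (-(1 - l ^ 2) * l ^ k) * hsq
  · simp only [zero_add, coeff_one_mul, coeff_one_X_sub_C_pow, constantCoeff_invOneSubCXPow,
      mul_one, coeff_invOneSubCXPow, pow_one, map_pow, map_sub, constantCoeff_X, constantCoeff_C,
      zero_sub, add_zero, pow_zero, one_mul, Nat.choose_one_right, Nat.cast_add, Nat.cast_one]
    rw [add_comm 1 n, Nat.choose_succ_self_right]
    push_cast
    ring

end PowerSeries

open PowerSeries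

section PowerSeriesEval

open Finset

variable {𝕜 : Type*} [RCLike 𝕜] {F G : 𝕜⟦X⟧} {z : 𝕜}

lemma coeff_mul_mul_pow_eq_sum_antidiagonal (F G : 𝕜⟦X⟧) (z : 𝕜) (n : ℕ) :
    coeff n (F * G) * z ^ n
      = ∑ p ∈ antidiagonal n, coeff p.1 F * z ^ p.1 * (coeff p.2 G * z ^ p.2) := by
  rw [coeff_mul, Finset.sum_mul]
  refine Finset.sum_congr rfl fun p hp => ?_
  rw [← mem_antidiagonal.1 hp, pow_add]
  ring

lemma summable_norm_coeff_mul_mul_pow (hF : Summable fun i => ‖coeff i F * z ^ i‖)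
    (hG : Summable fun i => ‖coeff i G * z ^ i‖) :
    Summable fun i => ‖coeff i (F * G) * z ^ i‖ := by
  simpa only [coeff_mul_mul_pow_eq_sum_antidiagonal] using
    summable_norm_sum_mul_antidiagonal_of_summable_norm hF hG

lemma hasSum_coeff_mul_mul_pow {a b : 𝕜} (hF : Summable fun i => ‖coeff i F * z ^ i‖)
    (hG : Summable fun i => ‖coeff i G * z ^ i‖) (ha : HasSum (fun i => coeff i F * z ^ i) a)
    (hb : HasSum (fun i => coeff i G * z ^ i) b) :
    HasSum (fun i => coeff i (F * G) * z ^ i) (a * b) := by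
  rw [← ha.tsum_eq, ← hb.tsum_eq, tsum_mul_tsum_eq_tsum_sum_antidiagonal_of_summable_norm hF hG]
  simp_rw [← coeff_mul_mul_pow_eq_sum_antidiagonal]
  exact (summable_norm_coeff_mul_mul_pow hF hG).of_norm.hasSum

lemma summable_norm_coeff_coe_mul_pow (P : Polynomial 𝕜) (z : 𝕜) :
    Summable fun i => ‖coeff i (P : 𝕜⟦X⟧) * z ^ i‖ := by
  refine summable_of_ne_finset_zero (s := Finset.range (P.natDegree + 1)) fun i hi => ?_
  rw [Polynomial.coeff_coe, Polynomial.coeff_eq_zero_of_natDegree_lt (by simpa using hi),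
    zero_mul, norm_zero]

lemma hasSum_coeff_coe_mul_pow (P : Polynomial 𝕜) (z : 𝕜) :
    HasSum (fun i => coeff i (P : 𝕜⟦X⟧) * z ^ i) (P.eval z) := by
  rw [Polynomial.eval_eq_sum_range]
  simp_rw [Polynomial.coeff_coe]
  exact hasSum_sum_of_ne_finset_zero fun i hi => by
    rw [Polynomial.coeff_eq_zero_of_natDegree_lt (by simpa using hi), zero_mul]

lemma summable_norm_coeff_invOneSubCXPow_mul_pow {l z : 𝕜} (hlz : ‖l * z‖ < 1) (N : ℕ) :
    Summable fun i => ‖coeff i (invOneSubCXPow l N) * z ^ i‖ := by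
  have := summable_choose_mul_geometric_of_norm_lt_one N (r := ‖l * z‖) (by simpa using hlz)
  refine this.congr fun i => ?_
  simp [mul_pow, mul_assoc]

lemma hasSum_coeff_invOneSubCXPow_mul_pow {l z : 𝕜} (hlz : ‖l * z‖ < 1) (N : ℕ) :
    HasSum (fun i => coeff i (invOneSubCXPow l N) * z ^ i) (1 / (1 - l * z) ^ (N + 1)) := by
  simpa only [coeff_invOneSubCXPow, mul_assoc, mul_pow] using
    hasSum_choose_mul_geometric_of_norm_lt_one N hlz

end PowerSeriesEval

open Complex

lemma integral_exp_mul_I_zpow (q : ℤ) :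
    ∫ t in (0 : ℝ)..2 * Real.pi, exp (t * I) ^ q = if q = 0 then 2 * (Real.pi : ℂ) else 0 := by
  have hexp (t : ℝ) : exp (t * I) ^ q = exp (q * I * t) := by
    rw [← Complex.exp_int_mul]
    ring_nf
  simp_rw [hexp]
  split_ifs with hq
  · simp [hq]
  · have hqI : (q : ℂ) * I ≠ 0 := by simp [hq, Complex.I_ne_zero]
    have hperiod : exp (q * I * (2 * Real.pi : ℝ)) = 1 := by
      rw [show (q : ℂ) * I * (2 * Real.pi : ℝ) = q * (2 * Real.pi * I) by push_cast; ring]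
      exact Complex.exp_int_mul_two_pi_mul_I q
    rw [integral_exp_mul_complex hqI, hperiod]
    simp

lemma continuous_exp_mul_I_zpow (q : ℤ) : Continuous fun t : ℝ => exp (t * I) ^ q :=
  (by fun_prop : Continuous fun t : ℝ => exp (t * I)).zpow₀ q fun _ => Or.inl (exp_ne_zero _)

lemma integral_tsum_mul_exp_mul_I_zpow {a : ℕ → ℂ} (ha : Summable fun i => ‖a i‖) (m : ℕ) :
    ∫ t in (0 : ℝ)..2 * Real.pi, (∑' i, a i * exp (t * I) ^ i) * exp (t * I) ^ (-(m : ℤ))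
      = 2 * Real.pi * a m := by
  have hterm (i : ℕ) : ∫ t in (0 : ℝ)..2 * Real.pi, a i * exp (t * I) ^ ((i : ℤ) - m)
      = if i = m then 2 * Real.pi * a m else 0 := by
    rw [intervalIntegral.integral_const_mul, integral_exp_mul_I_zpow]
    by_cases h : i = m
    · simp [h, mul_comm]
    · simp [h, sub_eq_zero]
  have hpointwise (t : ℝ) : HasSum (fun i => a i * exp (t * I) ^ ((i : ℤ) - m))
      ((∑' i, a i * exp (t * I) ^ i) * exp (t * I) ^ (-(m : ℤ))) := by
    have hsummable : Summable fun i => a i * exp (t * I) ^ i :=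
      Summable.of_norm_bounded ha fun i => by simp
    have hsplit : (fun i : ℕ => a i * exp (t * I) ^ ((i : ℤ) - m))
        = fun i => a i * exp (t * I) ^ i * exp (t * I) ^ (-(m : ℤ)) := by
      funext i
      rw [mul_assoc, sub_eq_add_neg, zpow_add₀ (exp_ne_zero _), zpow_natCast]
    rw [hsplit]
    exact hsummable.hasSum.mul_right _
  have hsum : HasSum (fun i => ∫ t in (0 : ℝ)..2 * Real.pi, a i * exp (t * I) ^ ((i : ℤ) - m))
      (∫ t in (0 : ℝ)..2 * Real.pi, (∑' i, a i * exp (t * I) ^ i) * exp (t * I) ^ (-(m : ℤ))) :=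
    intervalIntegral.hasSum_integral_of_dominated_convergence (fun i _ => ‖a i‖)
      (fun i => (continuous_const.mul (continuous_exp_mul_I_zpow _)).aestronglyMeasurable)
      (fun i => MeasureTheory.ae_of_all _ fun t _ => by simp [norm_zpow])
      (MeasureTheory.ae_of_all _ fun t _ => ha) intervalIntegrable_const
      (MeasureTheory.ae_of_all _ fun t _ => hpointwise t)
  simp only [hterm] at hsum
  exact hsum.unique (hasSum_ite_eq m _)

lemma ofReal_norm_one_sub_mul_sq {l : ℝ} {z : ℂ} (hz : ‖z‖ = 1) :
    ((‖1 - (l : ℂ) * z‖ ^ 2 : ℝ) : ℂ) = (1 - l * z) * (z - l) / z := by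
  have hz0 : z ≠ 0 := norm_ne_zero_iff.1 (by rw [hz]; exact one_ne_zero)
  rw [Complex.sq_norm, ← Complex.mul_conj, map_sub, map_one, map_mul, Complex.conj_ofReal,
    ← Complex.inv_eq_conj hz]
  field_simp

theorem integral_eval_div_one_sub_mul_pow_mul_zpow (P : Polynomial ℂ) {l : ℂ} (hl : ‖l‖ < 1)
    (N m : ℕ) :
    ∫ t in (0 : ℝ)..2 * Real.pi,
        P.eval (exp (t * I)) / (1 - l * exp (t * I)) ^ (N + 1) * exp (t * I) ^ (-(m : ℤ))
      = 2 * Real.pi * coeff m ((P : ℂ⟦X⟧) * invOneSubCXPow l N) := by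
  have hlz (z : ℂ) (hz : ‖z‖ ≤ 1) : ‖l * z‖ < 1 := by
    rw [norm_mul]
    nlinarith [norm_nonneg l, norm_nonneg z]
  have hseries (t : ℝ) : P.eval (exp (t * I)) / (1 - l * exp (t * I)) ^ (N + 1)
      = ∑' i, coeff i ((P : ℂ⟦X⟧) * invOneSubCXPow l N) * exp (t * I) ^ i := by
    have hlt := hlz _ (norm_exp_ofReal_mul_I t).le
    rw [div_eq_mul_one_div, (hasSum_coeff_mul_mul_pow (summable_norm_coeff_coe_mul_pow P _)
      (summable_norm_coeff_invOneSubCXPow_mul_pow hlt N) (hasSum_coeff_coe_mul_pow P _)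
      (hasSum_coeff_invOneSubCXPow_mul_pow hlt N)).tsum_eq]
  have hsummable := summable_norm_coeff_mul_mul_pow (summable_norm_coeff_coe_mul_pow P 1)
    (summable_norm_coeff_invOneSubCXPow_mul_pow (hlz 1 norm_one.le) N)
  simp only [one_pow, mul_one] at hsummable
  simp_rw [hseries]
  exact integral_tsum_mul_exp_mul_I_zpow hsummable m

lemma blaschke_pow_mul_zpow_eq_eval_div {l z : ℂ} (hz : z ≠ 0) (n k : ℕ) :
    ((z - l) / (1 - l * z)) ^ n * z ^ (-(k : ℤ) - 1) * z
      = ((Polynomial.X - Polynomial.C l) ^ n).eval z / (1 - l * z) ^ n * z ^ (-(k : ℤ)) := by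
  rw [mul_assoc, ← zpow_add_one₀ hz, sub_add_cancel, div_pow, Polynomial.eval_pow,
    Polynomial.eval_sub, Polynomial.eval_X, Polynomial.eval_C]

lemma poissonKernel_mul_blaschke_pow_eq_eval_div {l : ℝ} (hl : |l| < 1) {z : ℂ} (hz : ‖z‖ = 1)
    (n k : ℕ) :
    z⁻¹ * (((1 - l ^ 2) / ‖1 - (l : ℂ) * z‖ ^ 2 : ℝ) : ℂ) * ((z - l) / (1 - l * z)) ^ (k + 1)
        * z ^ (-((n + 1 : ℕ) : ℤ)) * z
      = (1 - (l : ℂ) ^ 2)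
        * (((Polynomial.X - Polynomial.C (l : ℂ)) ^ k).eval z / (1 - l * z) ^ (k + 1 + 1)
          * z ^ (-(n : ℤ))) := by
  have hz0 : z ≠ 0 := norm_ne_zero_iff.1 (by rw [hz]; exact one_ne_zero)
  have hlz : ‖(l : ℂ) * z‖ < 1 := by rwa [norm_mul, hz, mul_one, Complex.norm_real]
  have hlz0 : 1 - (l : ℂ) * z ≠ 0 := fun h => by simp [← sub_eq_zero.1 h] at hlz
  have hzl0 : z - l ≠ 0 := fun h => by
    rw [sub_eq_zero.1 h, Complex.norm_real, Real.norm_eq_abs] at hz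
    exact hl.ne hz
  have hexponent : -((n + 1 : ℕ) : ℤ) + 1 = -(n : ℤ) := by push_cast; ring
  rw [mul_assoc _ _ z, ← zpow_add_one₀ hz0, hexponent, Complex.ofReal_div,
    ofReal_norm_one_sub_mul_sq hz, Polynomial.eval_pow, Polynomial.eval_sub, Polynomial.eval_X,
    Polynomial.eval_C, div_pow, pow_succ _ k]
  push_cast
  field_simp
  ring

/-- Contour-integral identity: for `λ ∈ (0,1)`, `k ≥ 1`, `n ≥ 1`,
`\widehat{b_λ^n}(k) = ((−1)^{n−k}/(2πi)) ∫_{∂𝔻} (1/u)((1−λ²)/|1−λu|²) b_λ(u)^k u^{−n} du`,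
with both contour integrals written through the parametrization `z = e^{it}`,
`dz = i e^{it} dt` (so `(1/(2πi))∫ f dz = (1/(2π))∫₀^{2π} f(e^{it}) e^{it} dt`). -/
theorem stmt11 (l : ℝ) (hl : l ∈ Set.Ioo (0 : ℝ) 1) (n k : ℕ) (hn : 1 ≤ n) (hk : 1 ≤ k) :
    (1 / (2 * (Real.pi : ℂ)))
        * ∫ t in (0 : ℝ)..(2 * Real.pi),
            ((Complex.exp (t * Complex.I) - (l : ℂ))
                / (1 - (l : ℂ) * Complex.exp (t * Complex.I))) ^ n
              * Complex.exp (t * Complex.I) ^ (-(k : ℤ) - 1)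
              * Complex.exp (t * Complex.I)
      = (-1 : ℂ) ^ ((n : ℤ) - (k : ℤ)) * (1 / (2 * (Real.pi : ℂ)))
        * ∫ t in (0 : ℝ)..(2 * Real.pi),
            (Complex.exp (t * Complex.I))⁻¹
              * (((1 - l ^ 2)
                  / ‖1 - (l : ℂ) * Complex.exp (t * Complex.I)‖ ^ 2 : ℝ) : ℂ)
              * ((Complex.exp (t * Complex.I) - (l : ℂ))
                  / (1 - (l : ℂ) * Complex.exp (t * Complex.I))) ^ k
              * Complex.exp (t * Complex.I) ^ (-(n : ℤ))
              * Complex.exp (t * Complex.I) := by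
  obtain ⟨n, rfl⟩ : ∃ n', n = n' + 1 := ⟨n - 1, by omega⟩
  obtain ⟨k, rfl⟩ : ∃ k', k = k' + 1 := ⟨k - 1, by omega⟩
  have hl' : |l| < 1 := abs_lt.2 ⟨by linarith [hl.1], hl.2⟩
  have hlC : ‖(l : ℂ)‖ < 1 := by rwa [Complex.norm_real]
  have hsign : (-1 : ℂ) ^ (((n + 1 : ℕ) : ℤ) - ((k + 1 : ℕ) : ℤ)) = (-1) ^ (n + k) := by
    rw [zpow_sub₀ (by norm_num), zpow_natCast, zpow_natCast, div_eq_mul_inv, ← inv_pow, inv_neg,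
      inv_one, ← pow_add]
    ring
  rw [intervalIntegral.integral_congr fun t _ =>
      blaschke_pow_mul_zpow_eq_eval_div (exp_ne_zero (t * I)) (n + 1) (k + 1),
    intervalIntegral.integral_congr fun t _ =>
      poissonKernel_mul_blaschke_pow_eq_eval_div hl' (norm_exp_ofReal_mul_I t) n k,
    intervalIntegral.integral_const_mul, integral_eval_div_one_sub_mul_pow_mul_zpow _ hlC,
    integral_eval_div_one_sub_mul_pow_mul_zpow _ hlC]
  simp only [Polynomial.coe_pow, Polynomial.coe_sub, Polynomial.coe_X, Polynomial.coe_C,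
    coeff_succ_X_sub_C_pow_mul_invOneSubCXPow, hsign]
  ring
end

section
/- Let λ ∈ (0,1), α₀ = (1−λ)/(1+λ), and a ∈ (α₀, α₀^{−1}). Let φ₊ ∈ (0,π) satisfy cos φ₊ = (a(1+λ²)−(1−λ²))/(2λa), and let h̃_a(φ) have second derivative h̃_a''(φ) = 2λ(1−λ²)sin φ/(1+λ²−2λcos φ)². Then h̃_a''(φ₊) = a·√((a − α₀)(α₀^{−1} − a)). -/
/-- With `cos φ₊ = (a(1+λ²)−(1−λ²))/(2λa)`, `φ₊ ∈ (0,π)`, one has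
`2λ(1−λ²)sin φ₊/(1+λ²−2λcos φ₊)² = a√((a−α₀)(α₀⁻¹−a))`. -/
theorem stmt15 (l a : ℝ) (hl : l ∈ Set.Ioo (0 : ℝ) 1)
    (ha : a ∈ Set.Ioo ((1 - l) / (1 + l)) ((1 + l) / (1 - l)))
    (φ : ℝ) (hφ : φ ∈ Set.Ioo 0 Real.pi)
    (hcos : Real.cos φ = (a * (1 + l ^ 2) - (1 - l ^ 2)) / (2 * l * a)) :
    2 * l * (1 - l ^ 2) * Real.sin φ / (1 + l ^ 2 - 2 * l * Real.cos φ) ^ 2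
      = a * Real.sqrt ((a - (1 - l) / (1 + l)) * ((1 + l) / (1 - l) - a)) := by
  obtain ⟨hl0, hl1⟩ := hl
  obtain ⟨ha1, ha2⟩ := ha
  have h1l : (0:ℝ) < 1 - l := by linarith
  have h1l' : (0:ℝ) < 1 + l := by linarith
  have h1l2 : (0:ℝ) < 1 - l ^ 2 := by nlinarith
  have hapos : 0 < a := lt_trans (div_pos h1l h1l') ha1
  have hs : 0 < Real.sin φ := Real.sin_pos_of_pos_of_lt_pi hφ.1 hφ.2
  have hsc : Real.sin φ ^ 2 = 1 - Real.cos φ ^ 2 := by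
    have := Real.sin_sq_add_cos_sq φ; linarith
  have hne : (2 * l * a) ≠ 0 := by positivity
  have key : (a - (1 - l) / (1 + l)) * ((1 + l) / (1 - l) - a)
      = (2 * l * a * Real.sin φ / (1 - l ^ 2)) ^ 2 := by
    rw [hcos] at hsc
    field_simp at hsc ⊢
    nlinarith [hsc, sq_nonneg (Real.sin φ)]
  have hge : 0 ≤ 2 * l * a * Real.sin φ / (1 - l ^ 2) := by positivity
  rw [key, Real.sqrt_sq hge, hcos]
  have hden : 1 + l ^ 2 - 2 * l * ((a * (1 + l ^ 2) - (1 - l ^ 2)) / (2 * l * a))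
      = (1 - l ^ 2) / a := by field_simp; ring
  rw [hden]
  field_simp
end

section
/- Let g_N(z) = ((z−1/2)/(1−z/2))^N. Then sup_{z∈𝔻}|g_N(z)| = 1 and, for N ≥ 10, min_{|z| = 1−1/N} |g_N(z)| ≥ e^{−4}. -/
/-!
Write `b_a(z) = (z - a) / (1 - conj a * z)`, so that `g_N = b_{1/2}^N`. The identity
`|1 - conj a z|² - |z - a|² = (1 - |a|²)(1 - |z|²)` gives `|b_a| ≤ 1` on the closed disk, and,
combined with `|1 - conj a z| ≥ 1 - |a||z|`, the sharp lower bound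
`|b_a(z)| ≥ (|z| - |a|) / (1 - |a||z|)`. That bound tends to `1` as `|z| → 1`, which gives the
supremum; at `|z| = 1 - 1/N` and `a = 1/2` it equals `(N - 2)/(N + 1) ≥ N/(N + 4)`, and
`(N/(N + 4))^N = (1 + 4/N)^{-N} ≥ e^{-4}`.
-/

open Filter Topology ComplexConjugate

noncomputable def blaschkeFactor (a z : ℂ) : ℂ := (z - a) / (1 - conj a * z)

lemma norm_one_sub_conj_mul_sq_sub_norm_sub_sq (a z : ℂ) :
    ‖1 - conj a * z‖ ^ 2 - ‖z - a‖ ^ 2 = (1 - ‖a‖ ^ 2) * (1 - ‖z‖ ^ 2) := by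
  simp only [Complex.sq_norm, Complex.normSq_apply, Complex.sub_re, Complex.sub_im,
    Complex.mul_re, Complex.mul_im, Complex.conj_re, Complex.conj_im, Complex.one_re,
    Complex.one_im]
  ring

lemma one_sub_norm_mul_norm_le_norm_one_sub_conj_mul (a z : ℂ) :
    1 - ‖a‖ * ‖z‖ ≤ ‖1 - conj a * z‖ := by
  calc 1 - ‖a‖ * ‖z‖ = ‖(1 : ℂ)‖ - ‖conj a * z‖ := by simp
    _ ≤ ‖1 - conj a * z‖ := norm_sub_norm_le _ _

lemma norm_blaschkeFactor_le_one {a z : ℂ} (ha : ‖a‖ < 1) (hz : ‖z‖ ≤ 1) :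
    ‖blaschkeFactor a z‖ ≤ 1 := by
  have hid := norm_one_sub_conj_mul_sq_sub_norm_sub_sq a z
  have hden := one_sub_norm_mul_norm_le_norm_one_sub_conj_mul a z
  have hpos : 0 < 1 - ‖a‖ * ‖z‖ := by nlinarith [norm_nonneg a, norm_nonneg z]
  rw [blaschkeFactor, norm_div, div_le_one (hpos.trans_le hden)]
  refine (sq_le_sq₀ (norm_nonneg _) (norm_nonneg _)).1 ?_
  have : 0 ≤ (1 - ‖a‖ ^ 2) * (1 - ‖z‖ ^ 2) := by
    apply mul_nonneg <;> nlinarith [norm_nonneg a, norm_nonneg z]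
  linarith

lemma div_le_norm_blaschkeFactor {a z : ℂ} (ha : ‖a‖ < 1) (hz : ‖z‖ ≤ 1) :
    (‖z‖ - ‖a‖) / (1 - ‖a‖ * ‖z‖) ≤ ‖blaschkeFactor a z‖ := by
  have hid := norm_one_sub_conj_mul_sq_sub_norm_sub_sq a z
  have hden := one_sub_norm_mul_norm_le_norm_one_sub_conj_mul a z
  have hpos : 0 < 1 - ‖a‖ * ‖z‖ := by nlinarith [norm_nonneg a, norm_nonneg z]
  have hK : 0 ≤ (1 - ‖a‖ ^ 2) * (1 - ‖z‖ ^ 2) := by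
    apply mul_nonneg <;> nlinarith [norm_nonneg a, norm_nonneg z]
  have hc1 : ((‖z‖ - ‖a‖) / (1 - ‖a‖ * ‖z‖)) ^ 2 ≤ 1 := by
    rw [div_pow, div_le_one (by positivity)]
    nlinarith
  generalize hc : (‖z‖ - ‖a‖) / (1 - ‖a‖ * ‖z‖) = c at hc1
  have hcd : c * (1 - ‖a‖ * ‖z‖) = ‖z‖ - ‖a‖ := by rw [← hc, div_mul_cancel₀ _ hpos.ne']
  -- `‖z - a‖² - c²‖1 - conj a * z‖² = (1 - c²)(‖1 - conj a * z‖² - (1 - ‖a‖‖z‖)²)`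
  have key : c ^ 2 * ‖1 - conj a * z‖ ^ 2 ≤ ‖z - a‖ ^ 2 := by
    have : 0 ≤ (1 - c ^ 2) * (‖1 - conj a * z‖ ^ 2 - (1 - ‖a‖ * ‖z‖) ^ 2) :=
      mul_nonneg (by linarith) (by nlinarith)
    nlinarith
  have hsq : c ^ 2 ≤ ‖blaschkeFactor a z‖ ^ 2 := by
    rw [blaschkeFactor, norm_div, div_pow, le_div_iff₀ (pow_pos (hpos.trans_le hden) 2)]
    exact key
  exact (abs_le_of_sq_le_sq' hsq (norm_nonneg _)).2

lemma isLUB_norm_blaschkeFactor_pow {a : ℂ} (ha : ‖a‖ < 1) (N : ℕ) :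
    IsLUB ((fun z => ‖blaschkeFactor a z ^ N‖) '' Metric.ball 0 1) 1 := by
  refine ⟨?_, fun b hb => ?_⟩
  · rintro _ ⟨z, hz, rfl⟩
    simp only [norm_pow]
    exact pow_le_one₀ (norm_nonneg _) (norm_blaschkeFactor_le_one ha (mem_ball_zero_iff.1 hz).le)
  · -- on the radius `[‖a‖, 1)` the lower bound tends to `1`
    set f : ℝ → ℝ := fun r => ((r - ‖a‖) / (1 - ‖a‖ * r)) ^ N
    have hf : Tendsto f (𝓝[<] 1) (𝓝 1) := by
      have hcont : ContinuousAt f 1 := by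
        refine ContinuousAt.pow (ContinuousAt.div (by fun_prop) (by fun_prop) ?_) N
        linarith
      have h1 : f 1 = 1 := by
        simp only [f, mul_one]
        rw [div_self (by linarith), one_pow]
      simpa [h1] using hcont.tendsto.mono_left nhdsWithin_le_nhds
    refine le_of_tendsto hf (eventually_of_mem (Ioo_mem_nhdsLT ha) fun r hr => ?_)
    have hr0 : 0 ≤ r := (norm_nonneg a).trans hr.1.le
    have hmem : (r : ℂ) ∈ Metric.ball 0 1 := by
      rw [mem_ball_zero_iff, Complex.norm_real, Real.norm_of_nonneg hr0]
      exact hr.2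
    refine le_trans ?_ (hb ⟨r, hmem, rfl⟩)
    have hlow := div_le_norm_blaschkeFactor ha (mem_ball_zero_iff.1 hmem).le
    rw [Complex.norm_real, Real.norm_of_nonneg hr0] at hlow
    simp only [f, norm_pow]
    exact pow_le_pow_left₀ (div_nonneg (by linarith [hr.1]) (by nlinarith [hr.2])) hlow N

lemma exp_neg_four_le_pow {N : ℕ} (hN : 8 ≤ N) :
    Real.exp (-4) ≤ (((N : ℝ) - 2) / (N + 1)) ^ N := by
  have hN' : (8 : ℝ) ≤ N := by exact_mod_cast hN
  have hexp : (1 + 4 / (N : ℝ)) ^ N ≤ Real.exp 4 := by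
    simpa [sub_eq_add_neg, neg_div] using
      Real.one_sub_div_pow_le_exp_neg (n := N) (t := -4) (by linarith)
  have hratio : (N : ℝ) / (N + 4) ≤ (N - 2) / (N + 1) := by
    rw [div_le_div_iff₀ (by linarith) (by linarith)]
    nlinarith
  calc Real.exp (-4) = (Real.exp 4)⁻¹ := Real.exp_neg 4
    _ ≤ ((1 + 4 / (N : ℝ)) ^ N)⁻¹ := inv_anti₀ (by positivity) hexp
    _ = ((N : ℝ) / (N + 4)) ^ N := by
      rw [← inv_pow]
      congr 1
      field_simp
    _ ≤ (((N : ℝ) - 2) / (N + 1)) ^ N := pow_le_pow_left₀ (by positivity) hratio N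

lemma blaschkeFactor_half (z : ℂ) : blaschkeFactor (1 / 2) z = (z - 1 / 2) / (1 - z / 2) := by
  rw [blaschkeFactor, map_div₀, map_one, map_ofNat, one_div_mul_eq_div]

/-- For `g_N(z) = ((z−1/2)/(1−z/2))^N`: `sup_{z ∈ 𝔻} |g_N(z)| = 1`, and for `N ≥ 10`,
`min_{|z| = 1−1/N} |g_N(z)| ≥ e^{−4}`. -/
theorem stmt17 (N : ℕ) (hN : 10 ≤ N) :
    IsLUB ((fun z : ℂ => ‖((z - 1 / 2) / (1 - z / 2)) ^ N‖) ''
        Metric.ball (0 : ℂ) 1) 1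
      ∧ ∀ z : ℂ, ‖z‖ = 1 - 1 / (N : ℝ) →
          Real.exp (-4) ≤ ‖((z - 1 / 2) / (1 - z / 2)) ^ N‖ := by
  have ha : ‖(1 / 2 : ℂ)‖ = 1 / 2 := by norm_num
  simp only [← blaschkeFactor_half]
  refine ⟨isLUB_norm_blaschkeFactor_pow (by norm_num) N, fun z hz => ?_⟩
  have hN' : (10 : ℝ) ≤ N := by exact_mod_cast hN
  have hlow := div_le_norm_blaschkeFactor (a := 1 / 2) (z := z) (by norm_num)
    (by rw [hz]; linarith [show 0 ≤ 1 / (N : ℝ) by positivity])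
  have hval : (1 - 1 / (N : ℝ) - 1 / 2) / (1 - 1 / 2 * (1 - 1 / N)) = (N - 2) / (N + 1) := by
    have : (N : ℝ) ≠ 0 := by positivity
    have : (N : ℝ) + 1 ≠ 0 := by positivity
    field_simp
    rw [div_eq_iff (by linarith)]
    ring
  rw [hz, ha, hval] at hlow
  calc Real.exp (-4) ≤ (((N : ℝ) - 2) / (N + 1)) ^ N := exp_neg_four_le_pow (by omega)
    _ ≤ ‖blaschkeFactor (1 / 2) z‖ ^ N :=
      pow_le_pow_left₀ (div_nonneg (by linarith) (by linarith)) hlow N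
    _ = ‖blaschkeFactor (1 / 2) z ^ N‖ := (norm_pow _ _).symm
end

section
/- Let 2 ≤ p < q and suppose that for each k ≥ 1 there exists an analytic polynomial-like building block as in the paper; concretely, given integers A ≥ A₀ and the functions g_N = b_{1/2}^N, the function f(z) = Σ_{k≥1} A^{k v_r} g_{A^k}(z) z^{A^k} (with r ∈ (p,q)\{4} and v_r as specified) is analytic in 𝔻 and satisfies min_{|z| = 1 − A^{−k}} |f(z)| ≳ A^{k v_r} → ∞ as k → ∞; in particular f is strongly annular. -/
open Filter

/-- A function `f` analytic in the unit disc is strongly annular if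
`limsup_{r→1⁻} min_{|z|=r} |f(z)| = ∞`. -/
def StronglyAnnular (f : ℂ → ℂ) : Prop :=
  DifferentiableOn ℂ f (Metric.ball (0 : ℂ) 1) ∧
    ∀ M : ℝ, ∀ r₀ ∈ Set.Ico (0 : ℝ) 1, ∃ r : ℝ, r₀ < r ∧ r < 1 ∧
      ∀ z : ℂ, ‖z‖ = r → M ≤ ‖f z‖

/-- `v_r = 1/2 − 1/r` for `2 ≤ r < 4` and `v_r = 1/3 − 1/(3r)` for `r > 4`. -/
noncomputable def vExp (r : ℝ) : ℝ := if r < 4 then 1 / 2 - 1 / r else 1 / 3 - 1 / (3 * r)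

/-!
On the circle `|z| = 1 - 1/N`, `N = A^k`, the Blaschke factor satisfies
`|b_{1/2}(z)| ≥ |b_{1/2}(z)|² ≥ 1 - 6/N`, so the `k`-th block has modulus
`A^{k v} |b_{1/2}(z) z|^N ≥ A^{k v} (1 - 7/N)^N ≥ e^{-14} A^{k v}`.
The earlier blocks are bounded by `A^{j v}` and sum to at most `A^{k v} / (A^v - 1)`;
the later ones are crushed because `|z|^N ≤ e^{-1}`, so that the `(k+i)`-th is at most
`A^{k v} (A e^{-A})^i`. For large `A` both errors are below `e^{-14} A^{k v} / 4`, and these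
circles accumulate at the boundary.
-/

open Real Topology ComplexConjugate

noncomputable def blaschke (a z : ℂ) : ℂ := (z - a) / (1 - conj a * z)

lemma blaschke_half (z : ℂ) : blaschke (1 / 2) z = (z - 1 / 2) / (1 - z / 2) := by
  simp only [blaschke, map_div₀, map_one, map_ofNat]
  ring

lemma normSq_one_sub_conj_mul_sub_normSq_sub (a z : ℂ) :
    Complex.normSq (1 - conj a * z) - Complex.normSq (z - a)
      = (1 - Complex.normSq a) * (1 - Complex.normSq z) := by
  simp only [Complex.normSq_apply, Complex.sub_re, Complex.sub_im, Complex.mul_re,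
    Complex.mul_im, Complex.conj_re, Complex.conj_im, Complex.one_re, Complex.one_im]
  ring

lemma one_sub_norm_le_norm_one_sub_conj_mul {a z : ℂ} (hz : ‖z‖ ≤ 1) :
    1 - ‖a‖ ≤ ‖1 - conj a * z‖ := by
  have : ‖conj a * z‖ ≤ ‖a‖ := by
    rw [norm_mul, Complex.norm_conj]
    exact mul_le_of_le_one_right (norm_nonneg a) hz
  have := norm_sub_norm_le (1 : ℂ) (conj a * z)
  rw [norm_one] at this
  linarith

lemma norm_sq_blaschke {a z : ℂ} (ha : ‖a‖ < 1) (hz : ‖z‖ ≤ 1) :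
    ‖blaschke a z‖ ^ 2 = 1 - (1 - ‖a‖ ^ 2) * (1 - ‖z‖ ^ 2) / ‖1 - conj a * z‖ ^ 2 := by
  have hD : 0 < ‖1 - conj a * z‖ :=
    (sub_pos.2 ha).trans_le (one_sub_norm_le_norm_one_sub_conj_mul hz)
  have key := normSq_one_sub_conj_mul_sub_normSq_sub a z
  simp only [← Complex.sq_norm] at key
  rw [blaschke, norm_div, div_pow, eq_sub_iff_add_eq, ← add_div, div_eq_one_iff_eq (by positivity)]
  linarith

lemma norm_blaschke_le_one {a z : ℂ} (ha : ‖a‖ < 1) (hz : ‖z‖ ≤ 1) : ‖blaschke a z‖ ≤ 1 := by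
  have h := norm_sq_blaschke ha hz
  have : 0 ≤ (1 - ‖a‖ ^ 2) * (1 - ‖z‖ ^ 2) / ‖1 - conj a * z‖ ^ 2 := by
    have : ‖a‖ ^ 2 < 1 := by nlinarith [norm_nonneg a]
    have : ‖z‖ ^ 2 ≤ 1 := by nlinarith [norm_nonneg z]
    apply div_nonneg <;> nlinarith
  nlinarith [norm_nonneg (blaschke a z)]

lemma one_sub_mul_le_norm_sq_blaschke {a z : ℂ} (ha : ‖a‖ < 1) (hz : ‖z‖ ≤ 1) :
    1 - 2 * (1 + ‖a‖) / (1 - ‖a‖) * (1 - ‖z‖) ≤ ‖blaschke a z‖ ^ 2 := by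
  have hD := one_sub_norm_le_norm_one_sub_conj_mul (a := a) hz
  have ha' : 0 < 1 - ‖a‖ := sub_pos.2 ha
  rw [norm_sq_blaschke ha hz, sub_le_sub_iff_left]
  have ha2 : 0 ≤ 1 - ‖a‖ ^ 2 := by nlinarith [norm_nonneg a]
  have hz2 : 1 - ‖z‖ ^ 2 ≤ 2 * (1 - ‖z‖) := by nlinarith [norm_nonneg z]
  calc (1 - ‖a‖ ^ 2) * (1 - ‖z‖ ^ 2) / ‖1 - conj a * z‖ ^ 2
      ≤ (1 - ‖a‖ ^ 2) * (2 * (1 - ‖z‖)) / (1 - ‖a‖) ^ 2 := by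
        gcongr
    _ = 2 * (1 + ‖a‖) / (1 - ‖a‖) * (1 - ‖z‖) := by
        field_simp
        ring

lemma exp_neg_two_mul_le_one_sub {t : ℝ} (h0 : 0 ≤ t) (h1 : t ≤ 1 / 2) :
    exp (-(2 * t)) ≤ 1 - t := by
  have h : 1 ≤ (1 - t) * exp (2 * t) := by nlinarith [add_one_le_exp (2 * t)]
  rwa [exp_neg, inv_le_iff_one_le_mul₀ (exp_pos _)]

lemma exp_neg_two_mul_le_one_sub_div_pow {c : ℝ} {N : ℕ} (hc : 0 ≤ c) (hN : 2 * c ≤ N) :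
    exp (-(2 * c)) ≤ (1 - c / N) ^ N := by
  rcases N.eq_zero_or_pos with rfl | hN0
  · simp [show c = 0 by simp at hN; linarith]
  have hN0' : (0 : ℝ) < N := Nat.cast_pos.2 hN0
  calc exp (-(2 * c)) = exp (-(2 * (c / N))) ^ N := by
        rw [← exp_nat_mul]; field_simp
    _ ≤ (1 - c / N) ^ N := by
        gcongr
        exact exp_neg_two_mul_le_one_sub (by positivity) (by rw [div_le_iff₀ hN0']; linarith)

lemma exp_neg_fourteen_le_norm_blaschke_half_mul_pow {N : ℕ} (hN : 14 ≤ N) {z : ℂ}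
    (hz : ‖z‖ = 1 - (N : ℝ)⁻¹) : exp (-14) ≤ ‖blaschke (1 / 2) z * z‖ ^ N := by
  have hN' : (14 : ℝ) ≤ N := by exact_mod_cast hN
  have ht : (N : ℝ)⁻¹ ≤ 1 / 14 := by rw [inv_le_comm₀ (by linarith) (by norm_num)]; linarith
  have ht0 : 0 < (N : ℝ)⁻¹ := by positivity
  have hz1 : ‖z‖ ≤ 1 := by linarith
  have ha : ‖(1 / 2 : ℂ)‖ = 1 / 2 := by norm_num
  have hb1 := norm_blaschke_le_one (by rw [ha]; norm_num) hz1
  have hb2 := one_sub_mul_le_norm_sq_blaschke (a := 1 / 2) (by rw [ha]; norm_num) hz1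
  rw [ha, hz] at hb2
  have hb : 1 - 6 * (N : ℝ)⁻¹ ≤ ‖blaschke (1 / 2) z‖ := by
    nlinarith [norm_nonneg (blaschke (1 / 2) z)]
  have hbz : 1 - 7 / (N : ℝ) ≤ ‖blaschke (1 / 2) z * z‖ := by
    rw [norm_mul, hz, div_eq_mul_inv]
    nlinarith
  calc exp (-14) = exp (-(2 * 7)) := by norm_num
    _ ≤ (1 - 7 / (N : ℝ)) ^ N := exp_neg_two_mul_le_one_sub_div_pow (by norm_num) (by linarith)
    _ ≤ ‖blaschke (1 / 2) z * z‖ ^ N := by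
        gcongr
        rw [sub_nonneg, div_le_one (by linarith)]
        linarith

lemma norm_sub_sum_sub_tsum_le_norm_tsum {E : Type*} [NormedAddCommGroup E] [CompleteSpace E]
    {F : ℕ → E} (hF : Summable fun j => ‖F j‖) (m : ℕ) :
    ‖F m‖ - ∑ j ∈ Finset.range m, ‖F j‖ - ∑' i, ‖F (i + (m + 1))‖ ≤ ‖∑' j, F j‖ := by
  rw [← hF.of_norm.sum_add_tsum_nat_add (m + 1), Finset.sum_range_succ]
  set S := ∑ j ∈ Finset.range m, F j
  set T := ∑' i, F (i + (m + 1))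
  have hS : ‖S‖ ≤ ∑ j ∈ Finset.range m, ‖F j‖ := norm_sum_le _ _
  have hT : ‖T‖ ≤ ∑' i, ‖F (i + (m + 1))‖ :=
    norm_tsum_le_tsum_norm ((summable_nat_add_iff (m + 1)).2 hF)
  have h : ‖F m‖ ≤ ‖S + F m + T‖ + ‖S‖ + ‖T‖ := by
    calc ‖F m‖ = ‖(S + F m + T) - S - T‖ := by congr 1; abel
      _ ≤ ‖S + F m + T‖ + ‖S‖ + ‖T‖ :=
        (norm_sub_le _ _).trans (by gcongr; exact norm_sub_le _ _)
  linarith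

lemma sum_range_pow_succ_le {x : ℝ} (hx : 1 < x) (m : ℕ) :
    ∑ j ∈ Finset.range m, x ^ (j + 1) ≤ (x - 1)⁻¹ * x ^ (m + 1) := by
  rw [← div_eq_inv_mul, le_div_iff₀ (sub_pos.2 hx)]
  have h : (∑ j ∈ Finset.range m, x ^ (j + 1)) * (x - 1) = x ^ (m + 1) - x := by
    simp only [pow_succ', ← Finset.mul_sum, mul_assoc, geom_sum_mul]
    ring
  linarith

lemma summable_pow_mul_pow_pow {A : ℕ} (hA : 2 ≤ A) {x ρ : ℝ} (hx : 0 ≤ x) (hρ0 : 0 ≤ ρ)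
    (hρ1 : ρ < 1) : Summable fun j : ℕ => x ^ j * ρ ^ (A ^ j) := by
  refine summable_of_ratio_norm_eventually_le (r := 1 / 2) (by norm_num) ?_
  have hto : Tendsto (fun n : ℕ => x * ρ ^ n) atTop (𝓝 0) := by
    simpa using (tendsto_pow_atTop_nhds_zero_of_lt_one hρ0 hρ1).const_mul x
  filter_upwards [hto.eventually_lt_const (by norm_num : (0 : ℝ) < 1 / 2)] with n hn
  have hgap : A ^ n + n ≤ A ^ (n + 1) := by
    have := Nat.lt_pow_self (a := A) (n := n) (by omega)
    rw [pow_succ]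
    nlinarith
  have hρ : ρ ^ (A ^ (n + 1)) ≤ ρ ^ (A ^ n) * ρ ^ n := by
    rw [← pow_add]
    exact pow_le_pow_of_le_one hρ0 hρ1.le hgap
  rw [Real.norm_of_nonneg (by positivity), Real.norm_of_nonneg (by positivity)]
  calc x ^ (n + 1) * ρ ^ (A ^ (n + 1)) ≤ x ^ (n + 1) * (ρ ^ (A ^ n) * ρ ^ n) := by gcongr
    _ = (x * ρ ^ n) * (x ^ n * ρ ^ (A ^ n)) := by ring
    _ ≤ 1 / 2 * (x ^ n * ρ ^ (A ^ n)) := by gcongr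

lemma summable_pow_succ_mul_pow_pow_succ {A : ℕ} (hA : 2 ≤ A) {x ρ : ℝ} (hx : 0 ≤ x)
    (hρ0 : 0 ≤ ρ) (hρ1 : ρ < 1) : Summable fun j : ℕ => x ^ (j + 1) * ρ ^ (A ^ (j + 1)) :=
  (summable_nat_add_iff 1).2 (summable_pow_mul_pow_pow hA hx hρ0 hρ1)

lemma tsum_pow_succ_mul_pow_pow_succ_le {A : ℕ} (hA : 2 ≤ A) {x w : ℝ} (hx0 : 0 ≤ x)
    (hxA : x ≤ A) (hw0 : 0 ≤ w) (hw1 : w ≤ 1) (hy : A * w ^ A ≤ 1 / 2) :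
    ∑' i : ℕ, x ^ (i + 1) * w ^ (A ^ (i + 1)) ≤ 2 * (A * w ^ A) := by
  set y := (A : ℝ) * w ^ A
  have hy0 : 0 ≤ y := by positivity
  have hterm : ∀ i : ℕ, x ^ (i + 1) * w ^ (A ^ (i + 1)) ≤ y ^ (i + 1) := by
    intro i
    have hpow : w ^ (A ^ (i + 1)) ≤ (w ^ A) ^ (i + 1) := by
      rw [← pow_mul]
      exact pow_le_pow_of_le_one hw0 hw1 (Nat.mul_le_pow (by omega) _)
    calc x ^ (i + 1) * w ^ (A ^ (i + 1)) ≤ (A : ℝ) ^ (i + 1) * (w ^ A) ^ (i + 1) := by gcongr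
      _ = y ^ (i + 1) := by rw [mul_pow]
  have hgeom : HasSum (fun i : ℕ => y ^ (i + 1)) (y * (1 - y)⁻¹) := by
    simp only [pow_succ']
    exact (hasSum_geometric_of_lt_one hy0 (by linarith)).mul_left y
  have hsum : Summable fun i : ℕ => x ^ (i + 1) * w ^ (A ^ (i + 1)) :=
    hgeom.summable.of_nonneg_of_le (fun i => by positivity) hterm
  calc ∑' i : ℕ, x ^ (i + 1) * w ^ (A ^ (i + 1)) ≤ y * (1 - y)⁻¹ :=
        hasSum_le hterm hsum.hasSum hgeom
    _ ≤ 2 * y := by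
        rw [mul_comm 2]
        gcongr
        rw [inv_le_comm₀ (by linarith) (by norm_num)]
        linarith

noncomputable def lacunaryTerm (A : ℕ) (v : ℝ) (j : ℕ) (z : ℂ) : ℂ :=
  (((A : ℝ) ^ (((j : ℝ) + 1) * v) : ℝ) : ℂ) * ((z - 1 / 2) / (1 - z / 2)) ^ (A ^ (j + 1))
    * z ^ (A ^ (j + 1))

/-- The series `∑_{k ≥ 1} A^{k v} g_{A^k}(z) z^{A^k}`, `g_N = b_{1/2}^N`, indexed by `j = k - 1`. -/
noncomputable def lacunaryBlaschkeSeries (A : ℕ) (v : ℝ) (z : ℂ) : ℂ :=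
  ∑' j, lacunaryTerm A v j z

section LacunaryBlaschkeSeries

variable {A : ℕ} {v : ℝ}

lemma norm_lacunaryTerm (j : ℕ) (z : ℂ) :
    ‖lacunaryTerm A v j z‖
      = ((A : ℝ) ^ v) ^ (j + 1) * ‖blaschke (1 / 2) z * z‖ ^ (A ^ (j + 1)) := by
  rw [lacunaryTerm, ← blaschke_half, mul_assoc, ← mul_pow, norm_mul, norm_pow, Complex.norm_real,
    Real.norm_of_nonneg (by positivity), ← Nat.cast_succ, mul_comm ((j + 1 : ℕ) : ℝ),
    rpow_mul_natCast A.cast_nonneg]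

lemma norm_lacunaryTerm_le (j : ℕ) {z : ℂ} (hz : ‖z‖ ≤ 1) :
    ‖lacunaryTerm A v j z‖ ≤ ((A : ℝ) ^ v) ^ (j + 1) * ‖z‖ ^ (A ^ (j + 1)) := by
  rw [norm_lacunaryTerm, norm_mul]
  have hb := norm_blaschke_le_one (a := 1 / 2) (by norm_num) hz
  gcongr
  exact mul_le_of_le_one_left (norm_nonneg z) hb

lemma summable_norm_lacunaryTerm (hA : 2 ≤ A) {z : ℂ} (hz : ‖z‖ < 1) :
    Summable fun j => ‖lacunaryTerm A v j z‖ :=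
  (summable_pow_succ_mul_pow_pow_succ hA (Real.rpow_nonneg A.cast_nonneg v) (norm_nonneg z)
    hz).of_nonneg_of_le (fun _ => norm_nonneg _) fun j => norm_lacunaryTerm_le j hz.le

lemma differentiableOn_lacunaryBlaschkeSeries (hA : 2 ≤ A) :
    DifferentiableOn ℂ (lacunaryBlaschkeSeries A v) (Metric.ball 0 1) := by
  refine differentiableOn_of_locally_differentiableOn fun z₀ hz₀ => ?_
  rw [mem_ball_zero_iff] at hz₀
  set ρ := (‖z₀‖ + 1) / 2
  have hρ1 : ρ < 1 := by simp only [ρ]; linarith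
  have hz₀ρ : z₀ ∈ Metric.ball 0 ρ := by rw [mem_ball_zero_iff]; simp only [ρ]; linarith
  refine ⟨Metric.ball 0 ρ, Metric.isOpen_ball, hz₀ρ, ?_⟩
  refine (Complex.differentiableOn_tsum_of_summable_norm
    (summable_pow_succ_mul_pow_pow_succ hA (Real.rpow_nonneg A.cast_nonneg v) (by positivity) hρ1)
    (fun j => ?_) Metric.isOpen_ball fun j w hw => ?_).mono Set.inter_subset_right
  · intro w hw
    rw [mem_ball_zero_iff] at hw
    have hw2 : 1 - w / 2 ≠ 0 := by
      intro h
      have : ‖w‖ = 2 := by rw [show w = 2 by linear_combination -2 * h]; norm_num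
      linarith
    unfold lacunaryTerm
    fun_prop (disch := exact hw2)
  · rw [mem_ball_zero_iff] at hw
    refine (norm_lacunaryTerm_le j (by linarith)).trans ?_
    gcongr

lemma sum_range_norm_lacunaryTerm_le (hx : 1 < (A : ℝ) ^ v) {z : ℂ} (hz : ‖z‖ ≤ 1) (m : ℕ) :
    ∑ j ∈ Finset.range m, ‖lacunaryTerm A v j z‖
      ≤ ((A : ℝ) ^ v - 1)⁻¹ * ((A : ℝ) ^ v) ^ (m + 1) := by
  refine (Finset.sum_le_sum fun j _ => ?_).trans (sum_range_pow_succ_le hx m)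
  refine (norm_lacunaryTerm_le j hz).trans ?_
  exact mul_le_of_le_one_right (by positivity) (pow_le_one₀ (norm_nonneg z) hz)

lemma tsum_norm_lacunaryTerm_add_le (hA : 2 ≤ A) (hxA : (A : ℝ) ^ v ≤ A) {z : ℂ} (hz : ‖z‖ < 1)
    (m : ℕ) (hy : A * (‖z‖ ^ A ^ (m + 1)) ^ A ≤ 1 / 2) :
    ∑' i, ‖lacunaryTerm A v (i + (m + 1)) z‖
      ≤ 2 * (A * (‖z‖ ^ A ^ (m + 1)) ^ A) * ((A : ℝ) ^ v) ^ (m + 1) := by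
  set x := (A : ℝ) ^ v
  set w := ‖z‖ ^ A ^ (m + 1)
  have hw0 : 0 ≤ w := by positivity
  have hw1 : w < 1 := pow_lt_one₀ (norm_nonneg z) hz (by positivity)
  have hterm : ∀ i, ‖lacunaryTerm A v (i + (m + 1)) z‖
      ≤ x ^ (m + 1) * (x ^ (i + 1) * w ^ (A ^ (i + 1))) := by
    intro i
    refine (norm_lacunaryTerm_le _ hz.le).trans (le_of_eq ?_)
    rw [show A ^ (i + (m + 1) + 1) = A ^ (m + 1) * A ^ (i + 1) by rw [← pow_add]; ring_nf, pow_mul]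
    ring
  calc ∑' i, ‖lacunaryTerm A v (i + (m + 1)) z‖
      ≤ ∑' i, x ^ (m + 1) * (x ^ (i + 1) * w ^ (A ^ (i + 1))) :=
        ((summable_nat_add_iff (m + 1)).2 (summable_norm_lacunaryTerm hA hz)).tsum_le_tsum hterm
          ((summable_pow_succ_mul_pow_pow_succ hA (by positivity) hw0 hw1).mul_left _)
    _ ≤ x ^ (m + 1) * (2 * (A * w ^ A)) := by
        rw [tsum_mul_left]
        gcongr
        exact tsum_pow_succ_mul_pow_pow_succ_le hA (by positivity) hxA hw0 hw1.le hy
    _ = 2 * (A * w ^ A) * x ^ (m + 1) := mul_comm _ _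

lemma norm_lacunaryBlaschkeSeries_ge (hA : 14 ≤ A) (hx : 1 < (A : ℝ) ^ v) (hxA : (A : ℝ) ^ v ≤ A)
    (hy : A * exp (-A) ≤ 1 / 2) {k : ℕ} (hk : 1 ≤ k) {z : ℂ} (hz : ‖z‖ = 1 - (A : ℝ)⁻¹ ^ k) :
    (exp (-14) - ((A : ℝ) ^ v - 1)⁻¹ - 2 * (A * exp (-A))) * ((A : ℝ) ^ v) ^ k
      ≤ ‖lacunaryBlaschkeSeries A v z‖ := by
  obtain ⟨m, rfl⟩ : ∃ m, k = m + 1 := ⟨k - 1, by omega⟩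
  set N := A ^ (m + 1) with hN
  have hN14 : 14 ≤ N := hA.trans (Nat.le_self_pow (by omega) A)
  have hzN : ‖z‖ = 1 - (N : ℝ)⁻¹ := by rw [hz, hN, Nat.cast_pow, inv_pow]
  have hz1 : ‖z‖ < 1 := by rw [hzN]; simp [show (0 : ℝ) < N by positivity]
  have hmain : exp (-14) * ((A : ℝ) ^ v) ^ (m + 1) ≤ ‖lacunaryTerm A v m z‖ := by
    rw [norm_lacunaryTerm, mul_comm]
    gcongr
    exact exp_neg_fourteen_le_norm_blaschke_half_mul_pow hN14 hzN
  have hwA : A * (‖z‖ ^ N) ^ A ≤ A * exp (-A) := by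
    have hwe : ‖z‖ ^ N ≤ exp (-1) := by
      simpa [hzN, one_div] using one_sub_div_pow_le_exp_neg (n := N) (t := 1)
        (by exact_mod_cast (by omega : 1 ≤ N))
    calc (A : ℝ) * (‖z‖ ^ N) ^ A ≤ A * exp (-1) ^ A := by gcongr
      _ = A * exp (-A) := by rw [← exp_nat_mul]; ring_nf
  have hhead := sum_range_norm_lacunaryTerm_le hx hz1.le m
  have htail : ∑' i, ‖lacunaryTerm A v (i + (m + 1)) z‖
      ≤ 2 * (A * exp (-A)) * ((A : ℝ) ^ v) ^ (m + 1) :=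
    (tsum_norm_lacunaryTerm_add_le (by omega) hxA hz1 m (hwA.trans hy)).trans (by gcongr)
  have := norm_sub_sum_sub_tsum_le_norm_tsum
    (summable_norm_lacunaryTerm (A := A) (v := v) (by omega) hz1) m
  rw [lacunaryBlaschkeSeries]
  linarith

end LacunaryBlaschkeSeries

lemma eventually_norm_lacunaryBlaschkeSeries_ge {v : ℝ} (hv0 : 0 < v) (hv1 : v ≤ 1) :
    ∀ᶠ A : ℕ in atTop, ∀ k : ℕ, 1 ≤ k → ∀ z : ℂ, ‖z‖ = 1 - (A : ℝ)⁻¹ ^ k →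
      exp (-14) / 2 * (A : ℝ) ^ ((k : ℝ) * v) ≤ ‖lacunaryBlaschkeSeries A v z‖ := by
  have hx : Tendsto (fun A : ℕ => (A : ℝ) ^ v) atTop atTop :=
    (tendsto_rpow_atTop hv0).comp tendsto_natCast_atTop_atTop
  have hinv : Tendsto (fun A : ℕ => ((A : ℝ) ^ v - 1)⁻¹) atTop (𝓝 0) :=
    tendsto_inv_atTop_zero.comp (tendsto_atTop_add_const_right _ (-1) hx)
  have hexp : Tendsto (fun A : ℕ => (A : ℝ) * exp (-A)) atTop (𝓝 0) := by
    simpa [Function.comp_def] using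
      (tendsto_pow_mul_exp_neg_atTop_nhds_zero 1).comp tendsto_natCast_atTop_atTop
  filter_upwards [eventually_ge_atTop 14, hx.eventually_gt_atTop 1,
    hinv.eventually_lt_const (by positivity : 0 < exp (-14) / 4),
    hexp.eventually_lt_const (by positivity : 0 < exp (-14) / 8)]
    with A hA hx1 hinvA hexpA k hk z hz
  have hxA : (A : ℝ) ^ v ≤ A := by
    simpa using Real.rpow_le_rpow_of_exponent_le (by exact_mod_cast (by omega : 1 ≤ A)) hv1
  have hy : (A : ℝ) * exp (-A) ≤ 1 / 2 := by
    have : exp (-14 : ℝ) ≤ 1 := exp_le_one_iff.2 (by norm_num)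
    linarith
  rw [mul_comm (k : ℝ), rpow_mul_natCast A.cast_nonneg]
  refine le_trans ?_ (norm_lacunaryBlaschkeSeries_ge hA hx1 hxA hy hk hz)
  gcongr
  linarith

lemma stronglyAnnular_of_tendsto {f : ℂ → ℂ} (hf : DifferentiableOn ℂ f (Metric.ball 0 1))
    {ρ M : ℕ → ℝ} (hρ1 : ∀ k, ρ k < 1) (hρ : Tendsto ρ atTop (𝓝 1)) (hM : Tendsto M atTop atTop)
    (hbound : ∀ᶠ k in atTop, ∀ z : ℂ, ‖z‖ = ρ k → M k ≤ ‖f z‖) : StronglyAnnular f := by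
  refine ⟨hf, fun B r₀ hr₀ => ?_⟩
  obtain ⟨k, hkρ, hkM, hk⟩ :=
    ((hρ.eventually_const_lt hr₀.2).and ((hM.eventually_ge_atTop B).and hbound)).exists
  exact ⟨ρ k, hkρ, hρ1 k, fun z hz => hkM.trans (hk z hz)⟩

lemma vExp_pos {r : ℝ} (hr : 2 < r) : 0 < vExp r := by
  unfold vExp
  split_ifs with h
  · have : 1 / r < 1 / 2 := one_div_lt_one_div_of_lt (by norm_num) hr
    linarith
  · have : 1 / (3 * r) < 1 / 3 := one_div_lt_one_div_of_lt (by norm_num) (by linarith)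
    linarith

lemma vExp_le_one {r : ℝ} (hr : 0 ≤ r) : vExp r ≤ 1 := by
  unfold vExp
  split_ifs
  · have : 0 ≤ 1 / r := by positivity
    linarith
  · have : 0 ≤ 1 / (3 * r) := by positivity
    linarith

theorem stmt18_general (p q r : ℝ) (hp : 2 ≤ p) (hr : r ∈ Set.Ioo p q) :
    ∃ A₀ : ℕ, ∀ A : ℕ, A₀ ≤ A →
      DifferentiableOn ℂ
        (fun z : ℂ => ∑' k : ℕ,
          (((A : ℝ) ^ (((k : ℝ) + 1) * vExp r) : ℝ) : ℂ)
            * ((z - 1 / 2) / (1 - z / 2)) ^ (A ^ (k + 1)) * z ^ (A ^ (k + 1)))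
        (Metric.ball (0 : ℂ) 1)
      ∧ (∃ c : ℝ, 0 < c ∧ ∀ k : ℕ, 1 ≤ k → ∀ z : ℂ,
          ‖z‖ = 1 - ((A : ℝ))⁻¹ ^ k →
            c * (A : ℝ) ^ ((k : ℝ) * vExp r)
              ≤ ‖(∑' j : ℕ,
                  (((A : ℝ) ^ (((j : ℝ) + 1) * vExp r) : ℝ) : ℂ)
                    * ((z - 1 / 2) / (1 - z / 2)) ^ (A ^ (j + 1)) * z ^ (A ^ (j + 1)))‖)
      ∧ Tendsto (fun k : ℕ => (A : ℝ) ^ ((k : ℝ) * vExp r)) atTop atTop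
      ∧ StronglyAnnular
          (fun z : ℂ => ∑' k : ℕ,
            (((A : ℝ) ^ (((k : ℝ) + 1) * vExp r) : ℝ) : ℂ)
              * ((z - 1 / 2) / (1 - z / 2)) ^ (A ^ (k + 1)) * z ^ (A ^ (k + 1))) := by
  have hr2 : 2 < r := hp.trans_lt hr.1
  have hv0 := vExp_pos hr2
  obtain ⟨A₀, hA₀⟩ := eventually_atTop.1 ((eventually_ge_atTop 2).and
    (eventually_norm_lacunaryBlaschkeSeries_ge hv0 (vExp_le_one (by linarith))))
  refine ⟨A₀, fun A hA => ?_⟩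
  obtain ⟨hA2, hbound⟩ := hA₀ A hA
  have hdiff := differentiableOn_lacunaryBlaschkeSeries (v := vExp r) hA2
  have hA1 : (1 : ℝ) < A := by exact_mod_cast (by omega : 1 < A)
  have hgrowth : Tendsto (fun k : ℕ => (A : ℝ) ^ ((k : ℝ) * vExp r)) atTop atTop := by
    simpa only [mul_comm _ (vExp r), rpow_mul_natCast A.cast_nonneg] using
      tendsto_pow_atTop_atTop_of_one_lt (one_lt_rpow hA1 hv0)
  have hradius : Tendsto (fun k : ℕ => 1 - (A : ℝ)⁻¹ ^ k) atTop (𝓝 1) := by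
    simpa using (tendsto_pow_atTop_nhds_zero_of_lt_one (by positivity)
      (inv_lt_one_of_one_lt₀ hA1)).const_sub 1
  refine ⟨hdiff, ⟨exp (-14) / 2, by positivity, hbound⟩, hgrowth,
    stronglyAnnular_of_tendsto hdiff (fun k => ?_) hradius (hgrowth.const_mul_atTop (by positivity))
      ((eventually_ge_atTop 1).mono fun k hk => hbound k hk)⟩
  have : 0 < (A : ℝ)⁻¹ ^ k := by positivity
  linarith

/-- The Blaschke block `g_N(z) z^N`-based series: for `2 ≤ p < q`, `r ∈ (p,q) \ {4}`, and
integers `A ≥ A₀`, the function `f(z) = Σ_{k≥1} A^{k v_r} g_{A^k}(z) z^{A^k}` is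
analytic in `𝔻`, satisfies `min_{|z|=1−A^{−k}} |f| ≳ A^{k v_r} → ∞` as `k → ∞`;
in particular `f` is strongly annular. -/
theorem stmt18 (p q r : ℝ) (hp : 2 ≤ p) (hpq : p < q) (hr : r ∈ Set.Ioo p q)
    (hr4 : r ≠ 4) :
    ∃ A₀ : ℕ, ∀ A : ℕ, A₀ ≤ A →
      DifferentiableOn ℂ
        (fun z : ℂ => ∑' k : ℕ,
          (((A : ℝ) ^ (((k : ℝ) + 1) * vExp r) : ℝ) : ℂ)
            * ((z - 1 / 2) / (1 - z / 2)) ^ (A ^ (k + 1)) * z ^ (A ^ (k + 1)))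
        (Metric.ball (0 : ℂ) 1)
      ∧ (∃ c : ℝ, 0 < c ∧ ∀ k : ℕ, 1 ≤ k → ∀ z : ℂ,
          ‖z‖ = 1 - ((A : ℝ))⁻¹ ^ k →
            c * (A : ℝ) ^ ((k : ℝ) * vExp r)
              ≤ ‖(∑' j : ℕ,
                  (((A : ℝ) ^ (((j : ℝ) + 1) * vExp r) : ℝ) : ℂ)
                    * ((z - 1 / 2) / (1 - z / 2)) ^ (A ^ (j + 1)) * z ^ (A ^ (j + 1)))‖)
      ∧ Tendsto (fun k : ℕ => (A : ℝ) ^ ((k : ℝ) * vExp r)) atTop atTop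
      ∧ StronglyAnnular
          (fun z : ℂ => ∑' k : ℕ,
            (((A : ℝ) ^ (((k : ℝ) + 1) * vExp r) : ℝ) : ℂ)
              * ((z - 1 / 2) / (1 - z / 2)) ^ (A ^ (k + 1)) * z ^ (A ^ (k + 1))) :=
  stmt18_general p q r hp hr
end

section
/- Let λ ∈ (0,1) and α₀ = (1−λ)/(1+λ). The map a ↦ z₊(a) = ((a(1+λ²)−(1−λ²))/(2λa)) + √(((a(1+λ²)−(1−λ²))/(2λa))² − 1) is negative and strictly decreasing on (0, α₀), with z₊(a) → 0 as a → 0⁺ and z₊(a) → −1 as a → α₀⁻. -/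
open Filter

private lemma sqrt_key19 (w : ℝ) (hw : w < -1) :
    w + Real.sqrt (w ^ 2 - 1) = -(Real.sqrt (w ^ 2 - 1) - w)⁻¹ := by
  have h1 : (0:ℝ) ≤ w ^ 2 - 1 := by nlinarith
  have hs : Real.sqrt (w ^ 2 - 1) ^ 2 = w ^ 2 - 1 := Real.sq_sqrt h1
  have hnn := Real.sqrt_nonneg (w ^ 2 - 1)
  have hpos : 0 < Real.sqrt (w ^ 2 - 1) - w := by linarith
  have hne := ne_of_gt hpos
  field_simp
  nlinarith [hs]

/-- The map `a ↦ z₊(a) = w(a) + √(w(a)²−1)`, `w(a) = (a(1+λ²)−(1−λ²))/(2λa)`,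
is negative and strictly decreasing on `(0, α₀)`, tends to `0` as `a → 0⁺` and
to `−1` as `a → α₀⁻`. -/
theorem stmt19 (l : ℝ) (hl : l ∈ Set.Ioo (0 : ℝ) 1) :
    (∀ a ∈ Set.Ioo (0 : ℝ) ((1 - l) / (1 + l)),
        (a * (1 + l ^ 2) - (1 - l ^ 2)) / (2 * l * a)
          + Real.sqrt (((a * (1 + l ^ 2) - (1 - l ^ 2)) / (2 * l * a)) ^ 2 - 1) < 0)
    ∧ StrictAntiOn (fun a : ℝ =>
        (a * (1 + l ^ 2) - (1 - l ^ 2)) / (2 * l * a)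
          + Real.sqrt (((a * (1 + l ^ 2) - (1 - l ^ 2)) / (2 * l * a)) ^ 2 - 1))
        (Set.Ioo 0 ((1 - l) / (1 + l)))
    ∧ Tendsto (fun a : ℝ =>
        (a * (1 + l ^ 2) - (1 - l ^ 2)) / (2 * l * a)
          + Real.sqrt (((a * (1 + l ^ 2) - (1 - l ^ 2)) / (2 * l * a)) ^ 2 - 1))
        (nhdsWithin 0 (Set.Ioi 0)) (nhds 0)
    ∧ Tendsto (fun a : ℝ =>
        (a * (1 + l ^ 2) - (1 - l ^ 2)) / (2 * l * a)
          + Real.sqrt (((a * (1 + l ^ 2) - (1 - l ^ 2)) / (2 * l * a)) ^ 2 - 1))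
        (nhdsWithin ((1 - l) / (1 + l)) (Set.Iio ((1 - l) / (1 + l)))) (nhds (-1)) := by
  obtain ⟨hl0, hl1⟩ := hl
  set α₀ : ℝ := (1 - l) / (1 + l) with hα₀
  have hl1' : (0:ℝ) < 1 + l := by linarith
  have hα : 0 < α₀ := div_pos (by linarith) hl1'
  set W : ℝ → ℝ := fun a => (a * (1 + l ^ 2) - (1 - l ^ 2)) / (2 * l * a) with hWdef
  have hW : ∀ a ∈ Set.Ioo (0:ℝ) α₀, W a < -1 := by
    rintro a ⟨ha0, ha1⟩
    have h2 : a * (1 + l) < 1 - l := (lt_div_iff₀ hl1').mp ha1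
    rw [hWdef]
    rw [div_lt_iff₀ (by positivity)]
    nlinarith
  have hWmono : ∀ a b : ℝ, 0 < a → a < b → W a < W b := by
    intro a b ha hab
    rw [hWdef]
    have hb : 0 < b := ha.trans hab
    rw [div_lt_div_iff₀ (by positivity) (by positivity)]
    nlinarith [mul_pos (mul_pos hl0 (sub_pos.mpr hab)) (by nlinarith : (0:ℝ) < 1 - l^2)]
  have hneg : ∀ a ∈ Set.Ioo (0:ℝ) α₀,
      W a + Real.sqrt (W a ^ 2 - 1) < 0 := by
    intro a ha
    have hw := hW a ha
    rw [sqrt_key19 _ hw]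
    have : 0 < Real.sqrt (W a ^ 2 - 1) - W a := by
      have := Real.sqrt_nonneg (W a ^ 2 - 1); linarith
    simp only [neg_lt, neg_zero]
    positivity
  refine ⟨hneg, ?_, ?_, ?_⟩
  · -- strict anti
    intro a ha b hb hab
    have hwa := hW a ha
    have hwb := hW b hb
    have hwab := hWmono a b ha.1 hab
    simp only
    rw [sqrt_key19 _ hwa, sqrt_key19 _ hwb]
    have hsb : Real.sqrt (W b ^ 2 - 1) ≤ Real.sqrt (W a ^ 2 - 1) :=
      Real.sqrt_le_sqrt (by nlinarith)
    have hpb : 0 < Real.sqrt (W b ^ 2 - 1) - W b := by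
      have := Real.sqrt_nonneg (W b ^ 2 - 1); linarith
    have hlt : Real.sqrt (W b ^ 2 - 1) - W b < Real.sqrt (W a ^ 2 - 1) - W a := by
      linarith
    have := inv_strictAnti₀ hpb hlt
    linarith
  · -- tendsto 0
    have hWbot : Tendsto W (nhdsWithin 0 (Set.Ioi 0)) atBot := by
      have heq : ∀ a ∈ Set.Ioi (0:ℝ),
          W a = (1 + l ^ 2) / (2 * l) - (1 - l ^ 2) / (2 * l) * a⁻¹ := by
        intro a ha
        have ha0 : a ≠ 0 := ne_of_gt ha
        have hl' : l ≠ 0 := ne_of_gt hl0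
        rw [hWdef]
        field_simp
      have hd : 0 < (1 - l ^ 2) / (2 * l) := div_pos (by nlinarith) (by positivity)
      have h2 : Tendsto (fun a : ℝ => (1 - l ^ 2) / (2 * l) * a⁻¹)
          (nhdsWithin 0 (Set.Ioi 0)) atTop :=
        Tendsto.const_mul_atTop hd tendsto_inv_nhdsGT_zero
      have h3 : Tendsto (fun a : ℝ => -((1 - l ^ 2) / (2 * l) * a⁻¹))
          (nhdsWithin 0 (Set.Ioi 0)) atBot := tendsto_neg_atTop_atBot.comp h2
      have h1 : Tendsto (fun a : ℝ => (1 + l ^ 2) / (2 * l) - (1 - l ^ 2) / (2 * l) * a⁻¹)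
          (nhdsWithin 0 (Set.Ioi 0)) atBot := by
        simpa [sub_eq_add_neg] using
          tendsto_atBot_add_const_left _ ((1 + l ^ 2) / (2 * l)) h3
      exact h1.congr' (eventually_nhdsWithin_of_forall fun a ha => (heq a ha).symm)
    have hWtop : Tendsto (fun a => -W a) (nhdsWithin 0 (Set.Ioi 0)) atTop :=
      tendsto_neg_atBot_atTop.comp hWbot
    have hG : Tendsto (fun a => Real.sqrt (W a ^ 2 - 1) - W a)
        (nhdsWithin 0 (Set.Ioi 0)) atTop := by
      apply tendsto_atTop_mono _ hWtop
      intro a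
      have := Real.sqrt_nonneg (W a ^ 2 - 1); linarith
    have hmem : Set.Ioo (0:ℝ) α₀ ∈ nhdsWithin (0:ℝ) (Set.Ioi 0) :=
      Ioo_mem_nhdsGT_of_mem ⟨le_refl 0, hα⟩
    have heq : (fun a : ℝ => W a + Real.sqrt (W a ^ 2 - 1))
        =ᶠ[nhdsWithin 0 (Set.Ioi 0)] fun a => -(Real.sqrt (W a ^ 2 - 1) - W a)⁻¹ := by
      filter_upwards [hmem] with a ha
      exact sqrt_key19 _ (hW a ha)
    have h0 := Tendsto.congr' heq.symm (hG.inv_tendsto_atTop.neg)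
    rw [neg_zero] at h0
    exact h0
  · -- tendsto -1
    have hne : 2 * l * α₀ ≠ 0 := by positivity
    have hc : ContinuousAt (fun a : ℝ => W a + Real.sqrt (W a ^ 2 - 1)) α₀ := by
      have hdiv : ContinuousAt W α₀ := ContinuousAt.div (by fun_prop) (by fun_prop) hne
      exact hdiv.add (Real.continuous_sqrt.continuousAt.comp ((hdiv.pow 2).sub
        continuousAt_const))
    have hw0 : W α₀ = -1 := by
      have hl' : l ≠ 0 := ne_of_gt hl0
      have hkey : α₀ * (1 + l) = 1 - l := by rw [hα₀]; field_simp
      rw [hWdef]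
      rw [div_eq_iff (by positivity : (0:ℝ) < 2 * l * α₀).ne']
      linear_combination (1 + l) * hkey
    have hval : W α₀ + Real.sqrt (W α₀ ^ 2 - 1) = -1 := by
      rw [hw0]; norm_num
    have := (hc.tendsto).mono_left (nhdsWithin_le_nhds
      (s := Set.Iio α₀))
    rwa [hval] at this
end
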